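/- Let q be a real number with q > 1, let ε₂, ε₃ ∈ {+1, −1}, and let l be a half-odd-integer with l ≥ 1/2. On the complex vector space with basis |l,m⟩ for m ∈ {1/2, 3/2, …, l}, define operators J₁ and J₂ by J₁ |l,m⟩ = ε₂ [m]₊ |l,m⟩; J₂ |l,m⟩ = Ã_{l,m} |l,m+1⟩ − Ã_{l,m−1} |l,m−1⟩ for m ≥ 3/2, and J₂ |l,1/2⟩ = Ã_{l,1/2} |l,3/2⟩ + ε₃ [1/2]₊ [l+1/2] |l,1/2⟩; here [a] := (q^a − q^{−a})/(q − q⁻¹), [a]₊ := (q^a + q^{−a})/(q − q⁻¹), d̃_m := ((q^m − q^{−m})(q^{m+1} − q^{−m−1}))^{−1/2}, Ã_{l,m} := d̃_m ([l−m][l+m+1])^{1/2} (real powers and real square roots; the term |l,l+1⟩ is zero, as is Ã_{l,l}). Then J₁² J₂ + J₂ J₁² − (q+q⁻¹) J₁ J₂ J₁ = −J₂ and J₂² J₁ + J₁ J₂² − (q+q⁻¹) J₂ J₁ J₂ = −J₁; that is, these operators define the nonclassical type irreducible representation T_{ε,l} of U′_q(so_3), ε = (ε₂, ε₃). -/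

import Mathlib

/-- The `q`-number `[a] = (q^a - q^{-a})/(q - q⁻¹)` (real powers of `q`). -/
noncomputable def qn (q a : ℝ) : ℝ := (q ^ a - q ^ (-a)) / (q - q⁻¹)

/-- The `q`-number `[a]₊ = (q^a + q^{-a})/(q - q⁻¹)` (real powers of `q`). -/
noncomputable def qnp (q a : ℝ) : ℝ := (q ^ a + q ^ (-a)) / (q - q⁻¹)

/-- `d̃_m = ((q^m - q^{-m})(q^{m+1} - q^{-m-1}))^{-1/2}`. -/
noncomputable def dt (q m : ℝ) : ℝ :=
  ((q ^ m - q ^ (-m)) * (q ^ (m + 1) - q ^ (-(m + 1)))) ^ (-(1 / 2 : ℝ))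

/-- `Ã_{l,m} = d̃_m ([l-m][l+m+1])^{1/2}`. -/
noncomputable def At (q l m : ℝ) : ℝ :=
  dt q m * Real.sqrt (qn q (l - m) * qn q (l + m + 1))

/-- The basis vector of `Fin N → ℂ` with `ℤ`-valued index; out-of-range indices give `0`.
For the nonclassical type representation `T_{ε,l}` of `U'_q(so_3)` with `l = lam/2` (`lam`
odd), the index `t ∈ {0, …, (lam-1)/2}` corresponds to `|l, m⟩` with `m = t + 1/2`. -/
noncomputable def bz (N : ℕ) (t : ℤ) : Fin N → ℂ :=
  if h : 0 ≤ t ∧ t < N then Pi.single (⟨t.toNat, by omega⟩ : Fin N) 1 else 0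

lemma hq0' {q : ℝ} (hq : 1 < q) : 0 < q := lt_trans one_pos hq

lemma qsub_pos {q : ℝ} (hq : 1 < q) : 0 < q - q⁻¹ := by
  have h1 : q⁻¹ < 1 := inv_lt_one_of_one_lt₀ hq
  linarith

lemma rpow_sub_pos {q : ℝ} (hq : 1 < q) {a : ℝ} (ha : 0 < a) : 0 < q ^ a - q ^ (-a) := by
  have : q ^ (-a) < q ^ a := by
    rw [Real.rpow_lt_rpow_left_iff hq]; linarith
  linarith

lemma qn_nonneg {q : ℝ} (hq : 1 < q) {a : ℝ} (ha : 0 ≤ a) : 0 ≤ qn q a := by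
  unfold qn
  apply div_nonneg _ (qsub_pos hq).le
  have : q ^ (-a) ≤ q ^ a := by
    rw [Real.rpow_le_rpow_left_iff hq]; linarith
  linarith

/-- `At²` as a rational expression. -/
lemma Asq {q l m : ℝ} (hq : 1 < q) (hm : 0 < m) (hml : m ≤ l) :
    At q l m ^ 2 = qn q (l - m) * qn q (l + m + 1)
      / ((q ^ m - q ^ (-m)) * (q ^ (m + 1) - q ^ (-(m + 1)))) := by
  have h1 : 0 < q ^ m - q ^ (-m) := rpow_sub_pos hq hm
  have h2 : 0 < q ^ (m+1) - q ^ (-(m+1)) := rpow_sub_pos hq (by linarith)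
  have hy : 0 < (q ^ m - q ^ (-m)) * (q ^ (m + 1) - q ^ (-(m + 1))) := mul_pos h1 h2
  have hnn : 0 ≤ qn q (l - m) * qn q (l + m + 1) :=
    mul_nonneg (qn_nonneg hq (by linarith)) (qn_nonneg hq (by linarith))
  unfold At dt
  rw [mul_pow, Real.sq_sqrt hnn, ← Real.rpow_natCast (_ ^ _) 2, ← Real.rpow_mul hy.le]
  norm_num
  rw [Real.rpow_neg_one]
  ring

lemma I1 {q : ℝ} (hq : 1 < q) (m : ℝ) :
    qnp q m ^ 2 + qnp q (m+1) ^ 2 - (q + q⁻¹) * (qnp q m * qnp q (m+1)) + 1 = 0 := by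
  have hq0 : 0 < q := hq0' hq
  have hd : q - q⁻¹ ≠ 0 := (qsub_pos hq).ne'
  have hP : q ^ m ≠ 0 := (Real.rpow_pos_of_pos hq0 m).ne'
  have hqne : q ≠ 0 := hq0.ne'
  have h21 : q^2 - 1 ≠ 0 := by nlinarith
  unfold qnp
  simp only [Real.rpow_neg hq0.le, Real.rpow_add hq0, Real.rpow_one]
  rw [show q - q⁻¹ = (q^2-1)/q by field_simp <;> ring,
    show q + q⁻¹ = (q^2+1)/q by field_simp <;> ring]
  field_simp
  ring

lemma I3 {q : ℝ} (hq : 1 < q) (m : ℝ) :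
    qnp q m + qnp q (m+2) - (q + q⁻¹) * qnp q (m+1) = 0 := by
  have hq0 : 0 < q := hq0' hq
  have hd : q - q⁻¹ ≠ 0 := (qsub_pos hq).ne'
  have hP : q ^ m ≠ 0 := (Real.rpow_pos_of_pos hq0 m).ne'
  have hqne : q ≠ 0 := hq0.ne'
  have h21 : q^2 - 1 ≠ 0 := by nlinarith
  unfold qnp
  rw [show m+2 = m+1+1 by ring]
  simp only [Real.rpow_neg hq0.le, Real.rpow_add hq0, Real.rpow_one]
  rw [show q - q⁻¹ = (q^2-1)/q by field_simp <;> ring,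
    show q + q⁻¹ = (q^2+1)/q by field_simp <;> ring]
  field_simp
  ring

lemma e1lem {q : ℝ} (hq : 1 < q) (m : ℝ) :
    (q + q⁻¹) * qnp q (m+1) - 2 * qnp q m = q ^ (m+1) - q ^ (-(m+1)) := by
  have hq0 : 0 < q := hq0' hq
  have hqne : q ≠ 0 := hq0.ne'
  have h21 : q^2 - 1 ≠ 0 := by nlinarith
  have hP : q ^ m ≠ 0 := (Real.rpow_pos_of_pos hq0 m).ne'
  unfold qnp
  simp only [Real.rpow_neg hq0.le, Real.rpow_add hq0, Real.rpow_one]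
  rw [show q - q⁻¹ = (q^2-1)/q by field_simp <;> ring,
    show q + q⁻¹ = (q^2+1)/q by field_simp <;> ring]
  field_simp
  ring

lemma e2lem {q : ℝ} (hq : 1 < q) (m : ℝ) :
    (q + q⁻¹) * qnp q (m-1) - 2 * qnp q m = -(q ^ (m-1) - q ^ (-(m-1))) := by
  have hq0 : 0 < q := hq0' hq
  have hqne : q ≠ 0 := hq0.ne'
  have h21 : q^2 - 1 ≠ 0 := by nlinarith
  have hP : q ^ m ≠ 0 := (Real.rpow_pos_of_pos hq0 m).ne'
  unfold qnp
  simp only [Real.rpow_neg hq0.le, Real.rpow_sub hq0, Real.rpow_one]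
  rw [show q - q⁻¹ = (q^2-1)/q by field_simp <;> ring,
    show q + q⁻¹ = (q^2+1)/q by field_simp <;> ring]
  field_simp
  ring

lemma keylem {q l m : ℝ} (hq : 1 < q) :
    qn q (l-m) * qn q (l+m+1) - qn q (l-m+1) * qn q (l+m)
      = -((q ^ m - q ^ (-m)) * qnp q m) := by
  have hq0 : 0 < q := hq0' hq
  have hqne : q ≠ 0 := hq0.ne'
  have h21 : q^2 - 1 ≠ 0 := by nlinarith
  have hP : q ^ m ≠ 0 := (Real.rpow_pos_of_pos hq0 m).ne'
  have hY : q ^ l ≠ 0 := (Real.rpow_pos_of_pos hq0 l).ne'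
  unfold qn qnp
  simp only [Real.rpow_neg hq0.le, Real.rpow_sub hq0, Real.rpow_add hq0, Real.rpow_one]
  rw [show q - q⁻¹ = (q^2-1)/q by field_simp <;> ring]
  field_simp
  ring

lemma fraclem (x1 x2 D1 D2 D3 r : ℝ) (h1 : D1 ≠ 0) (h2 : D2 ≠ 0) (h3 : D3 ≠ 0)
    (hkey : x1 - x2 = -(D1 * r)) :
    x1 / (D1 * D2) * D2 + x2 / (D3 * D1) * (-D3) + r = 0 := by
  field_simp
  linear_combination hkey

lemma I4 {q l m : ℝ} (hq : 1 < q) (hm : 1 < m) (hml : m ≤ l) :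
    At q l m ^ 2 * ((q + q⁻¹) * qnp q (m+1) - 2 * qnp q m)
      + At q l (m-1) ^ 2 * ((q + q⁻¹) * qnp q (m-1) - 2 * qnp q m)
      + qnp q m = 0 := by
  have hq0 : 0 < q := hq0' hq
  have D1 : q ^ m - q ^ (-m) ≠ 0 := (rpow_sub_pos hq (by linarith)).ne'
  have D2 : q ^ (m+1) - q ^ (-(m+1)) ≠ 0 := (rpow_sub_pos hq (by linarith)).ne'
  have D3 : q ^ (m-1) - q ^ (-(m-1)) ≠ 0 := (rpow_sub_pos hq (by linarith)).ne'
  rw [Asq hq (by linarith) hml, Asq hq (show (0:ℝ) < m - 1 by linarith) (by linarith),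
    show m - 1 + 1 = m by ring, show l - (m-1) = l - m + 1 by ring,
    show l + (m-1) + 1 = l + m by ring, e1lem hq, e2lem hq]
  exact fraclem _ _ _ _ _ _ D1 D2 D3 (keylem hq)

set_option maxHeartbeats 1000000 in
lemma I5 {q l : ℝ} (hq : 1 < q) (hl : 1/2 ≤ l) :
    (qnp q (1/2) * qn q (l + 1/2))^2 * qnp q (1/2) * (2 - (q+q⁻¹))
      + At q l (1/2)^2 * ((q+q⁻¹) * qnp q (1/2+1) - 2 * qnp q (1/2))
      + qnp q (1/2) = 0 := by
  have hq0 : 0 < q := hq0' hq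
  have hqne : q ≠ 0 := hq0.ne'
  rw [Asq hq (by norm_num) hl, e1lem hq]
  unfold qn qnp
  simp only [Real.rpow_neg hq0.le, Real.rpow_add hq0, Real.rpow_sub hq0, Real.rpow_one]
  have hu2 : q ^ (1/2:ℝ) * q ^ (1/2:ℝ) = q := by
    rw [← Real.rpow_add hq0]; norm_num
  have hu1 : 1 < q ^ (1/2:ℝ) := by
    rw [show (1:ℝ) = q ^ (0:ℝ) by simp, Real.rpow_lt_rpow_left_iff hq]
    · norm_num
  have hY : q ^ l ≠ 0 := (Real.rpow_pos_of_pos hq0 l).ne'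
  set u := q ^ (1/2:ℝ) with hu
  set Y := q ^ l with hYdef
  have hune : u ≠ 0 := by positivity
  have n1 : u^2 - 1 ≠ 0 := by nlinarith
  have n2 : (u*u)^2 - 1 ≠ 0 := by nlinarith
  have n3 : (u*(u*u))^2 - 1 ≠ 0 := by
    have h3 : 1 < u*(u*u) := by nlinarith
    nlinarith [h3]
  rw [← hu2]
  rw [show u*u - (u*u)⁻¹ = ((u*u)^2-1)/(u*u) by field_simp <;> ring,
    show u*u + (u*u)⁻¹ = ((u*u)^2+1)/(u*u) by field_simp <;> ring,
    show u - u⁻¹ = (u^2-1)/u by field_simp <;> ring,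
    show u*(u*u) - (u*(u*u))⁻¹ = ((u*(u*u))^2-1)/(u*(u*u)) by field_simp <;> ring]
  have n4 : u^4 - 1 ≠ 0 := by nlinarith
  have n6 : u^6 - 1 ≠ 0 := by
    have h3 : 1 < u*(u*u) := by nlinarith
    nlinarith [h3]
  have n4' : -1 + u^4 ≠ 0 := by contrapose! n4; linarith
  have n6' : -1 + u^6 ≠ 0 := by contrapose! n6; linarith
  field_simp
  ring

lemma qnp_neg (q a : ℝ) : qnp q (-a) = qnp q a := by
  unfold qnp
  rw [neg_neg, add_comm]

lemma I2 {q : ℝ} (hq : 1 < q) : qnp q (1/2) ^ 2 * (2 - (q + q⁻¹)) + 1 = 0 := by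
  have h := I1 hq (-(1/2))
  rw [show (-(1/2) + 1 : ℝ) = 1/2 by norm_num, qnp_neg] at h
  linear_combination h

lemma I3h {q : ℝ} (hq : 1 < q) :
    qnp q (1/2) + qnp q (3/2) - (q + q⁻¹) * qnp q (1/2) = 0 := by
  have h := I3 hq (-(3/2))
  rw [show (-(3/2) + 2 : ℝ) = 1/2 by norm_num, show (-(3/2) + 1 : ℝ) = -(1/2) by norm_num,
    qnp_neg, qnp_neg] at h
  linear_combination h

lemma rel1 (q : ℝ) (hq : 1 < q) (ε₂ ε₃ : ℝ)
    (hε₂sq : ε₂ ^ 2 = 1) (hε₃sq : ε₃ ^ 2 = 1)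
    (k N : ℕ) (hN : N = k + 1) (l : ℝ) (hl : l = (2 * (k:ℝ) + 1) / 2)
    (J₁ J₂ : Module.End ℂ (Fin N → ℂ))
    (hJ₁ : ∀ t : ℤ, 0 ≤ t → t < N →
      J₁ (bz N t) = ((ε₂ * qnp q ((t : ℝ) + 1 / 2) : ℝ) : ℂ) • bz N t)
    (hJ₂ : ∀ t : ℤ, 1 ≤ t → t < N →
      J₂ (bz N t)
        = (At q l ((t : ℝ) + 1 / 2) : ℂ) • bz N (t + 1)
          - (At q l ((t : ℝ) - 1 / 2) : ℂ) • bz N (t - 1))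
    (hJ₂0 : J₂ (bz N 0)
        = (At q l (1 / 2) : ℂ) • bz N 1
          + ((ε₃ * qnp q (1 / 2) * qn q (l + 1 / 2) : ℝ) : ℂ) • bz N 0) :
    (J₁ ^ 2 * J₂ + J₂ * J₁ ^ 2 - ((q + q⁻¹ : ℝ) : ℂ) • (J₁ * J₂ * J₁) = -J₂) := by
  have hzero : ∀ t : ℤ, (t < 0 ∨ (N : ℤ) ≤ t) → bz N t = 0 := by
    intro t ht
    unfold bz
    rw [dif_neg]
    omega
  have hJ1' : ∀ t : ℤ, J₁ (bz N t) = ((ε₂ * qnp q ((t : ℝ) + 1/2) : ℝ) : ℂ) • bz N t := by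
    intro t
    by_cases h : 0 ≤ t ∧ t < (N : ℤ)
    · exact hJ₁ t h.1 h.2
    · rw [hzero t (by omega), map_zero, smul_zero]
  have hJ2' : ∀ t : ℤ, 1 ≤ t →
      J₂ (bz N t) = (At q l ((t : ℝ) + 1/2) : ℂ) • bz N (t + 1)
        - (At q l ((t : ℝ) - 1/2) : ℂ) • bz N (t - 1) := by
    intro t ht
    by_cases h : t < (N : ℤ)
    · exact hJ₂ t ht h
    · rw [hzero t (by omega), map_zero, hzero (t + 1) (by omega)]
      by_cases h2 : t = (N : ℤ)
      · have hAt : At q l ((t : ℝ) - 1/2) = 0 := by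
          unfold At qn
          rw [show l - ((t : ℝ) - 1/2) = 0 by
            have h3 : t = (k : ℤ) + 1 := by omega
            rw [h3, hl]; push_cast; ring]
          simp
        rw [hAt]
        simp
      · rw [hzero (t - 1) (by omega)]
        simp
  have key1 : ∀ t : ℤ, 0 ≤ t → t < (N : ℤ) →
      (J₁ ^ 2 * J₂ + J₂ * J₁ ^ 2 - ((q + q⁻¹ : ℝ) : ℂ) • (J₁ * J₂ * J₁)) (bz N t)
        = (-J₂) (bz N t) := by
    intro t ht0 htN
    by_cases ht : 1 ≤ t
    · have j2t := hJ2' t ht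
      have j1p : J₁ (bz N (t + 1)) = ((ε₂ * qnp q ((t : ℝ) + 3/2) : ℝ) : ℂ) • bz N (t + 1) := by
        have h := hJ1' (t + 1)
        rw [show ((t + 1 : ℤ) : ℝ) + 1/2 = (t : ℝ) + 3/2 by push_cast; ring] at h
        exact h
      have j1m : J₁ (bz N (t - 1)) = ((ε₂ * qnp q ((t : ℝ) - 1/2) : ℝ) : ℂ) • bz N (t - 1) := by
        have h := hJ1' (t - 1)
        rw [show ((t - 1 : ℤ) : ℝ) + 1/2 = (t : ℝ) - 1/2 by push_cast; ring] at h
        exact h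
      have j1t := hJ1' t
      simp only [LinearMap.add_apply, LinearMap.sub_apply, LinearMap.smul_apply,
        LinearMap.neg_apply, Module.End.mul_apply, pow_two, j2t, j1p, j1m, j1t,
        map_sub, map_smul, smul_sub, smul_smul]
      match_scalars
      · have i1 := I1 hq ((t : ℝ) + 1/2)
        rw [show (t : ℝ) + 1/2 + 1 = (t : ℝ) + 3/2 by ring] at i1
        push_cast
        norm_cast
        linear_combination (At q l ((t:ℝ) + 1/2)) * i1
          + (At q l ((t:ℝ) + 1/2)) * (qnp q ((t:ℝ)+1/2)^2 + qnp q ((t:ℝ)+3/2)^2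
              - (q+q⁻¹) * (qnp q ((t:ℝ)+1/2) * qnp q ((t:ℝ)+3/2))) * hε₂sq
      · have i1 := I1 hq ((t : ℝ) - 1/2)
        rw [show (t : ℝ) - 1/2 + 1 = (t : ℝ) + 1/2 by ring] at i1
        push_cast
        norm_cast
        linear_combination (-(At q l ((t:ℝ) - 1/2))) * i1
          + (-(At q l ((t:ℝ) - 1/2))) * (qnp q ((t:ℝ)-1/2)^2 + qnp q ((t:ℝ)+1/2)^2
              - (q+q⁻¹) * (qnp q ((t:ℝ)-1/2) * qnp q ((t:ℝ)+1/2))) * hε₂sq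
    · have htz : t = 0 := by omega
      subst htz
      have j1z : J₁ (bz N 0) = ((ε₂ * qnp q (1/2) : ℝ) : ℂ) • bz N 0 := by
        have h := hJ1' 0
        rw [show ((0 : ℤ) : ℝ) + 1/2 = (1/2 : ℝ) by norm_num] at h
        exact h
      have j1o : J₁ (bz N 1) = ((ε₂ * qnp q (3/2) : ℝ) : ℂ) • bz N 1 := by
        have h := hJ1' 1
        rw [show ((1 : ℤ) : ℝ) + 1/2 = (3/2 : ℝ) by norm_num] at h
        exact h
      simp only [LinearMap.add_apply, LinearMap.sub_apply, LinearMap.smul_apply,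
        LinearMap.neg_apply, Module.End.mul_apply, pow_two, hJ₂0, j1z, j1o,
        map_add, map_smul, smul_add, smul_smul]
      match_scalars
      · have i1 := I1 hq (1/2 : ℝ)
        rw [show (1/2 : ℝ) + 1 = (3/2 : ℝ) by norm_num] at i1
        norm_cast
        linear_combination (At q l (1/2)) * i1
          + (At q l (1/2)) * (qnp q (1/2)^2 + qnp q (3/2)^2
              - (q+q⁻¹) * (qnp q (1/2) * qnp q (3/2))) * hε₂sq
      · have i2 := I2 hq
        norm_cast
        linear_combination (ε₃ * qnp q (1/2) * qn q (l + 1/2)) * i2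
          + (ε₃ * qnp q (1/2) * qn q (l + 1/2))
              * (2 * qnp q (1/2)^2 - (q+q⁻¹) * qnp q (1/2)^2) * hε₂sq
  refine Module.Basis.ext (Pi.basisFun ℂ (Fin N)) fun i => ?_
  have hb : (Pi.basisFun ℂ (Fin N)) i = bz N (i : ℤ) := by
    unfold bz
    rw [dif_pos ⟨Int.natCast_nonneg _, by exact_mod_cast i.isLt⟩]
    simp [Pi.basisFun_apply]
  rw [hb]
  exact key1 i (Int.natCast_nonneg _) (by exact_mod_cast i.isLt)

lemma rel2 (q : ℝ) (hq : 1 < q) (ε₂ ε₃ : ℝ)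
    (hε₂sq : ε₂ ^ 2 = 1) (hε₃sq : ε₃ ^ 2 = 1)
    (k N : ℕ) (hN : N = k + 1) (l : ℝ) (hl : l = (2 * (k:ℝ) + 1) / 2)
    (J₁ J₂ : Module.End ℂ (Fin N → ℂ))
    (hJ₁ : ∀ t : ℤ, 0 ≤ t → t < N →
      J₁ (bz N t) = ((ε₂ * qnp q ((t : ℝ) + 1 / 2) : ℝ) : ℂ) • bz N t)
    (hJ₂ : ∀ t : ℤ, 1 ≤ t → t < N →
      J₂ (bz N t)
        = (At q l ((t : ℝ) + 1 / 2) : ℂ) • bz N (t + 1)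
          - (At q l ((t : ℝ) - 1 / 2) : ℂ) • bz N (t - 1))
    (hJ₂0 : J₂ (bz N 0)
        = (At q l (1 / 2) : ℂ) • bz N 1
          + ((ε₃ * qnp q (1 / 2) * qn q (l + 1 / 2) : ℝ) : ℂ) • bz N 0) :
    (J₂ ^ 2 * J₁ + J₁ * J₂ ^ 2 - ((q + q⁻¹ : ℝ) : ℂ) • (J₂ * J₁ * J₂) = -J₁) := by
  have hzero : ∀ t : ℤ, (t < 0 ∨ (N : ℤ) ≤ t) → bz N t = 0 := by
    intro t ht
    unfold bz
    rw [dif_neg]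
    omega
  have hJ1' : ∀ t : ℤ, J₁ (bz N t) = ((ε₂ * qnp q ((t : ℝ) + 1/2) : ℝ) : ℂ) • bz N t := by
    intro t
    by_cases h : 0 ≤ t ∧ t < (N : ℤ)
    · exact hJ₁ t h.1 h.2
    · rw [hzero t (by omega), map_zero, smul_zero]
  have hJ2' : ∀ t : ℤ, 1 ≤ t →
      J₂ (bz N t) = (At q l ((t : ℝ) + 1/2) : ℂ) • bz N (t + 1)
        - (At q l ((t : ℝ) - 1/2) : ℂ) • bz N (t - 1) := by
    intro t ht
    by_cases h : t < (N : ℤ)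
    · exact hJ₂ t ht h
    · rw [hzero t (by omega), map_zero, hzero (t + 1) (by omega)]
      by_cases h2 : t = (N : ℤ)
      · have hAt : At q l ((t : ℝ) - 1/2) = 0 := by
          unfold At qn
          rw [show l - ((t : ℝ) - 1/2) = 0 by
            have h3 : t = (k : ℤ) + 1 := by omega
            rw [h3, hl]; push_cast; ring]
          simp
        rw [hAt]
        simp
      · rw [hzero (t - 1) (by omega)]
        simp
  have key2 : ∀ t : ℤ, 0 ≤ t → t < (N : ℤ) →
      (J₂ ^ 2 * J₁ + J₁ * J₂ ^ 2 - ((q + q⁻¹ : ℝ) : ℂ) • (J₂ * J₁ * J₂)) (bz N t)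
        = (-J₁) (bz N t) := by
    intro t ht0 htN
    have hml : (t : ℝ) + 1/2 ≤ l := by
      rw [hl]
      have h4 : (t : ℝ) ≤ (k : ℝ) := by exact_mod_cast (by omega : t ≤ (k : ℤ))
      linarith
    by_cases ht2 : 2 ≤ t
    · have j2t := hJ2' t (by omega)
      have j2p : J₂ (bz N (t + 1)) = ((At q l ((t : ℝ) + 3/2) : ℝ) : ℂ) • bz N (t + 2)
          - ((At q l ((t : ℝ) + 1/2) : ℝ) : ℂ) • bz N t := by
        have h := hJ2' (t + 1) (by omega)
        rw [show ((t + 1 : ℤ) : ℝ) + 1/2 = (t : ℝ) + 3/2 by push_cast; ring,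
          show ((t + 1 : ℤ) : ℝ) - 1/2 = (t : ℝ) + 1/2 by push_cast; ring,
          show t + 1 + 1 = t + 2 by ring, show t + 1 - 1 = t by ring] at h
        exact h
      have j2m : J₂ (bz N (t - 1)) = ((At q l ((t : ℝ) - 1/2) : ℝ) : ℂ) • bz N t
          - ((At q l ((t : ℝ) - 3/2) : ℝ) : ℂ) • bz N (t - 2) := by
        have h := hJ2' (t - 1) (by omega)
        rw [show ((t - 1 : ℤ) : ℝ) + 1/2 = (t : ℝ) - 1/2 by push_cast; ring,
          show ((t - 1 : ℤ) : ℝ) - 1/2 = (t : ℝ) - 3/2 by push_cast; ring,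
          show t - 1 + 1 = t by ring, show t - 1 - 1 = t - 2 by ring] at h
        exact h
      have j1t := hJ1' t
      have j1p1 : J₁ (bz N (t + 1)) = ((ε₂ * qnp q ((t : ℝ) + 3/2) : ℝ) : ℂ) • bz N (t + 1) := by
        have h := hJ1' (t + 1)
        rw [show ((t + 1 : ℤ) : ℝ) + 1/2 = (t : ℝ) + 3/2 by push_cast; ring] at h
        exact h
      have j1m1 : J₁ (bz N (t - 1)) = ((ε₂ * qnp q ((t : ℝ) - 1/2) : ℝ) : ℂ) • bz N (t - 1) := by
        have h := hJ1' (t - 1)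
        rw [show ((t - 1 : ℤ) : ℝ) + 1/2 = (t : ℝ) - 1/2 by push_cast; ring] at h
        exact h
      have j1p2 : J₁ (bz N (t + 2)) = ((ε₂ * qnp q ((t : ℝ) + 5/2) : ℝ) : ℂ) • bz N (t + 2) := by
        have h := hJ1' (t + 2)
        rw [show ((t + 2 : ℤ) : ℝ) + 1/2 = (t : ℝ) + 5/2 by push_cast; ring] at h
        exact h
      have j1m2 : J₁ (bz N (t - 2)) = ((ε₂ * qnp q ((t : ℝ) - 3/2) : ℝ) : ℂ) • bz N (t - 2) := by
        have h := hJ1' (t - 2)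
        rw [show ((t - 2 : ℤ) : ℝ) + 1/2 = (t : ℝ) - 3/2 by push_cast; ring] at h
        exact h
      simp only [LinearMap.add_apply, LinearMap.sub_apply, LinearMap.smul_apply,
        LinearMap.neg_apply, Module.End.mul_apply, pow_two, j2t, j2p, j2m,
        j1t, j1p1, j1m1, j1p2, j1m2, map_sub, map_smul, smul_sub, smul_smul]
      match_scalars
      · have i3 := I3 hq ((t : ℝ) + 1/2)
        rw [show (t : ℝ) + 1/2 + 2 = (t : ℝ) + 5/2 by ring,
          show (t : ℝ) + 1/2 + 1 = (t : ℝ) + 3/2 by ring] at i3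
        norm_cast
        linear_combination (ε₂ * At q l ((t:ℝ) + 1/2) * At q l ((t:ℝ) + 3/2)) * i3
      · have i4 := I4 (l := l) hq (show (1:ℝ) < (t:ℝ) + 1/2 by
            have h4 : (2 : ℝ) ≤ (t : ℝ) := by exact_mod_cast ht2
            linarith) hml
        rw [show (t : ℝ) + 1/2 + 1 = (t : ℝ) + 3/2 by ring,
          show (t : ℝ) + 1/2 - 1 = (t : ℝ) - 1/2 by ring] at i4
        norm_cast
        linear_combination ε₂ * i4
      · have i3 := I3 hq ((t : ℝ) - 3/2)
        rw [show (t : ℝ) - 3/2 + 2 = (t : ℝ) + 1/2 by ring,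
          show (t : ℝ) - 3/2 + 1 = (t : ℝ) - 1/2 by ring] at i3
        norm_cast
        linear_combination (ε₂ * At q l ((t:ℝ) - 1/2) * At q l ((t:ℝ) - 3/2)) * i3
    · by_cases ht1 : 1 ≤ t
      · have htone : t = 1 := by omega
        subst htone
        have j2t : J₂ (bz N 1) = ((At q l (3/2) : ℝ) : ℂ) • bz N 2
            - ((At q l (1/2) : ℝ) : ℂ) • bz N 0 := by
          have h := hJ2' 1 (by omega)
          rw [show ((1 : ℤ) : ℝ) + 1/2 = (3/2 : ℝ) by norm_num,
            show ((1 : ℤ) : ℝ) - 1/2 = (1/2 : ℝ) by norm_num,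
            show (1 : ℤ) + 1 = 2 by ring, show (1 : ℤ) - 1 = 0 by ring] at h
          exact h
        have j2p : J₂ (bz N 2) = ((At q l (5/2) : ℝ) : ℂ) • bz N 3
            - ((At q l (3/2) : ℝ) : ℂ) • bz N 1 := by
          have h := hJ2' 2 (by omega)
          rw [show ((2 : ℤ) : ℝ) + 1/2 = (5/2 : ℝ) by norm_num,
            show ((2 : ℤ) : ℝ) - 1/2 = (3/2 : ℝ) by norm_num,
            show (2 : ℤ) + 1 = 3 by ring, show (2 : ℤ) - 1 = 1 by ring] at h
          exact h
        have j1z : J₁ (bz N 0) = ((ε₂ * qnp q (1/2) : ℝ) : ℂ) • bz N 0 := by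
          have h := hJ1' 0
          rw [show ((0 : ℤ) : ℝ) + 1/2 = (1/2 : ℝ) by norm_num] at h
          exact h
        have j1o : J₁ (bz N 1) = ((ε₂ * qnp q (3/2) : ℝ) : ℂ) • bz N 1 := by
          have h := hJ1' 1
          rw [show ((1 : ℤ) : ℝ) + 1/2 = (3/2 : ℝ) by norm_num] at h
          exact h
        have j1w : J₁ (bz N 2) = ((ε₂ * qnp q (5/2) : ℝ) : ℂ) • bz N 2 := by
          have h := hJ1' 2
          rw [show ((2 : ℤ) : ℝ) + 1/2 = (5/2 : ℝ) by norm_num] at h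
          exact h
        have j1r : J₁ (bz N 3) = ((ε₂ * qnp q (7/2) : ℝ) : ℂ) • bz N 3 := by
          have h := hJ1' 3
          rw [show ((3 : ℤ) : ℝ) + 1/2 = (7/2 : ℝ) by norm_num] at h
          exact h
        simp only [LinearMap.add_apply, LinearMap.sub_apply, LinearMap.smul_apply,
          LinearMap.neg_apply, Module.End.mul_apply, pow_two, j2t, j2p, hJ₂0,
          j1z, j1o, j1w, j1r, map_sub, map_add, map_smul, smul_sub, smul_add, smul_smul]
        match_scalars
        · have i3 := I3 hq (3/2 : ℝ)
          rw [show (3/2 : ℝ) + 2 = (7/2 : ℝ) by norm_num,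
            show (3/2 : ℝ) + 1 = (5/2 : ℝ) by norm_num] at i3
          norm_cast
          linear_combination (ε₂ * At q l (3/2) * At q l (5/2)) * i3
        · have i4 := I4 (l := l) hq (show (1:ℝ) < (3/2 : ℝ) by norm_num)
            (by rw [show ((1:ℤ):ℝ) + 1/2 = (3/2 : ℝ) by norm_num] at hml; exact hml)
          rw [show (3/2 : ℝ) + 1 = (5/2 : ℝ) by norm_num,
            show (3/2 : ℝ) - 1 = (1/2 : ℝ) by norm_num] at i4
          norm_cast
          linear_combination ε₂ * i4
        · have i3h := I3h hq
          norm_cast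
          linear_combination (-(ε₂ * (ε₃ * qnp q (1/2) * qn q (l + 1/2)) * At q l (1/2))) * i3h
      · have htz : t = 0 := by omega
        subst htz
        have j2o : J₂ (bz N 1) = ((At q l (3/2) : ℝ) : ℂ) • bz N 2
            - ((At q l (1/2) : ℝ) : ℂ) • bz N 0 := by
          have h := hJ2' 1 (by omega)
          rw [show ((1 : ℤ) : ℝ) + 1/2 = (3/2 : ℝ) by norm_num,
            show ((1 : ℤ) : ℝ) - 1/2 = (1/2 : ℝ) by norm_num,
            show (1 : ℤ) + 1 = 2 by ring, show (1 : ℤ) - 1 = 0 by ring] at h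
          exact h
        have j1z : J₁ (bz N 0) = ((ε₂ * qnp q (1/2) : ℝ) : ℂ) • bz N 0 := by
          have h := hJ1' 0
          rw [show ((0 : ℤ) : ℝ) + 1/2 = (1/2 : ℝ) by norm_num] at h
          exact h
        have j1o : J₁ (bz N 1) = ((ε₂ * qnp q (3/2) : ℝ) : ℂ) • bz N 1 := by
          have h := hJ1' 1
          rw [show ((1 : ℤ) : ℝ) + 1/2 = (3/2 : ℝ) by norm_num] at h
          exact h
        have j1w : J₁ (bz N 2) = ((ε₂ * qnp q (5/2) : ℝ) : ℂ) • bz N 2 := by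
          have h := hJ1' 2
          rw [show ((2 : ℤ) : ℝ) + 1/2 = (5/2 : ℝ) by norm_num] at h
          exact h
        simp only [LinearMap.add_apply, LinearMap.sub_apply, LinearMap.smul_apply,
          LinearMap.neg_apply, Module.End.mul_apply, pow_two, hJ₂0, j2o,
          j1z, j1o, j1w, map_sub, map_add, map_smul, smul_sub, smul_add, smul_smul]
        match_scalars
        · have i3 := I3 hq (1/2 : ℝ)
          rw [show (1/2 : ℝ) + 2 = (5/2 : ℝ) by norm_num,
            show (1/2 : ℝ) + 1 = (3/2 : ℝ) by norm_num] at i3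
          norm_cast
          linear_combination (ε₂ * At q l (1/2) * At q l (3/2)) * i3
        · have i5 := I5 (l := l) hq (by rw [hl]; have : (0:ℝ) ≤ (k:ℝ) := Nat.cast_nonneg k; linarith)
          rw [show (1/2 : ℝ) + 1 = (3/2 : ℝ) by norm_num] at i5
          norm_cast
          linear_combination ε₂ * i5
            + ε₂ * ((qnp q (1/2) * qn q (l + 1/2))^2 * qnp q (1/2) * (2 - (q+q⁻¹))) * hε₃sq
        · have i3h := I3h hq
          norm_cast
          linear_combination (ε₂ * (ε₃ * qnp q (1/2) * qn q (l + 1/2)) * At q l (1/2)) * i3h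
  refine Module.Basis.ext (Pi.basisFun ℂ (Fin N)) fun i => ?_
  have hb : (Pi.basisFun ℂ (Fin N)) i = bz N (i : ℤ) := by
    unfold bz
    rw [dif_pos ⟨Int.natCast_nonneg _, by exact_mod_cast i.isLt⟩]
    simp [Pi.basisFun_apply]
  rw [hb]
  exact key2 i (Int.natCast_nonneg _) (by exact_mod_cast i.isLt)

/-- **The nonclassical type representation `T_{ε,l}` of `U'_q(so_3)`.**  For real `q > 1`,
`ε₂, ε₃ = ±1` and a half-odd-integer `l = lam/2 ≥ 1/2`, the operators on the
`(l+1/2)`-dimensional space with basis `|l,m⟩`, `m = 1/2, …, l`, given by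
`J₁ |l,m⟩ = ε₂ [m]₊ |l,m⟩`, `J₂ |l,m⟩ = Ã_{l,m} |l,m+1⟩ - Ã_{l,m-1} |l,m-1⟩` for `m ≥ 3/2`,
and `J₂ |l,1/2⟩ = Ã_{l,1/2} |l,3/2⟩ + ε₃ [1/2]₊ [l+1/2] |l,1/2⟩`,
satisfy the `U'_q(so_3)` relations. -/
theorem stmt_13 (q : ℝ) (hq : 1 < q) (ε₂ ε₃ : ℝ)
    (hε₂ : ε₂ = 1 ∨ ε₂ = -1) (hε₃ : ε₃ = 1 ∨ ε₃ = -1)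
    (lam : ℕ) (hlam : Odd lam)
    (J₁ J₂ : Module.End ℂ (Fin ((lam + 1) / 2) → ℂ))
    (hJ₁ : ∀ t : ℤ, 0 ≤ t → 2 * t + 1 ≤ lam →
      J₁ (bz ((lam + 1) / 2) t)
        = ((ε₂ * qnp q ((t : ℝ) + 1 / 2) : ℝ) : ℂ) • bz ((lam + 1) / 2) t)
    (hJ₂ : ∀ t : ℤ, 1 ≤ t → 2 * t + 1 ≤ lam →
      J₂ (bz ((lam + 1) / 2) t)
        = (At q ((lam : ℝ) / 2) ((t : ℝ) + 1 / 2) : ℂ) • bz ((lam + 1) / 2) (t + 1)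
          - (At q ((lam : ℝ) / 2) ((t : ℝ) - 1 / 2) : ℂ) • bz ((lam + 1) / 2) (t - 1))
    (hJ₂0 : J₂ (bz ((lam + 1) / 2) 0)
        = (At q ((lam : ℝ) / 2) (1 / 2) : ℂ) • bz ((lam + 1) / 2) 1
          + ((ε₃ * qnp q (1 / 2) * qn q ((lam : ℝ) / 2 + 1 / 2) : ℝ) : ℂ)
              • bz ((lam + 1) / 2) 0) :
    (J₁ ^ 2 * J₂ + J₂ * J₁ ^ 2 - ((q + q⁻¹ : ℝ) : ℂ) • (J₁ * J₂ * J₁) = -J₂) ∧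
    (J₂ ^ 2 * J₁ + J₁ * J₂ ^ 2 - ((q + q⁻¹ : ℝ) : ℂ) • (J₂ * J₁ * J₂) = -J₁) := by
  have hε₂sq : ε₂ ^ 2 = 1 := by rcases hε₂ with rfl | rfl <;> norm_num
  have hε₃sq : ε₃ ^ 2 = 1 := by rcases hε₃ with rfl | rfl <;> norm_num
  obtain ⟨k, hk⟩ := hlam
  constructor
  · refine rel1 q hq ε₂ ε₃ hε₂sq hε₃sq k ((lam + 1) / 2) (by omega) ((lam : ℝ) / 2)
      (by rw [hk]; push_cast; ring) J₁ J₂ ?_ ?_ hJ₂0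
    · intro t h1 h2
      exact hJ₁ t h1 (by omega)
    · intro t h1 h2
      exact hJ₂ t h1 (by omega)
  · refine rel2 q hq ε₂ ε₃ hε₂sq hε₃sq k ((lam + 1) / 2) (by omega) ((lam : ℝ) / 2)
      (by rw [hk]; push_cast; ring) J₁ J₂ ?_ ?_ hJ₂0
    · intro t h1 h2
      exact hJ₁ t h1 (by omega)
    · intro t h1 h2
      exact hJ₂ t h1 (by omega)
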